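/- arXiv:2202.06333 — 2 statements merged into one kernel-verified Lean document; each statement's English description precedes it below -/
import Mathlib

section
/- For the Gaussian on ℝ^d and any m ≥ 1: ∑_{k=0}^{d-1} ∂/∂x_k Δ^{m-1}( x_k e^{-‖x‖²/2} ) = (2(m−1)+d) Δ^{m-1} e^{-‖x‖²/2} + ∑_{k=0}^{d-1} x_k Δ^{m-1} ∂/∂x_k e^{-‖x‖²/2}. -/
open Finset

/-- The Laplacian of a real-valued function on `ℝ^d`. -/
noncomputable def laplacian {d : ℕ} (f : EuclideanSpace ℝ (Fin d) → ℝ)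
    (x : EuclideanSpace ℝ (Fin d)) : ℝ :=
  ∑ i : Fin d, fderiv ℝ (fun y => fderiv ℝ f y (EuclideanSpace.single i 1)) x
    (EuclideanSpace.single i 1)

/-- Partial derivative in the `k`-th coordinate direction. -/
noncomputable def pderiv' {d : ℕ} (k : Fin d) (f : EuclideanSpace ℝ (Fin d) → ℝ)
    (x : EuclideanSpace ℝ (Fin d)) : ℝ :=
  fderiv ℝ f x (EuclideanSpace.single k 1)

namespace Stmt10T

open Polynomial

variable {d : ℕ}

/-! ### Polynomial operators -/

/-- `Sp p = 2p' - p`, from differentiating `p(t) e^{-t/2}` through `t = ‖x‖²`. -/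
noncomputable def Sp (p : ℝ[X]) : ℝ[X] := 2 * derivative p - p

/-- Radial Laplacian action: `Δ (p(t) g) = (Lp d p)(t) g`. -/
noncomputable def Lp (d : ℕ) (p : ℝ[X]) : ℝ[X] := C (d : ℝ) * Sp p + X * Sp (Sp p)

/-- `Δ (x_k p(t) g) = x_k (Mp d p)(t) g`. -/
noncomputable def Mp (d : ℕ) (p : ℝ[X]) : ℝ[X] := (C (d : ℝ) + 2) * Sp p + X * Sp (Sp p)

lemma Mp_Sp (d : ℕ) (p : ℝ[X]) : Mp d (Sp p) = Sp (Lp d p) := by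
  simp only [Mp, Lp, Sp, derivative_add, derivative_sub, derivative_mul, derivative_C,
    derivative_X, derivative_ofNat]
  ring

lemma Mp_neg (d : ℕ) (p : ℝ[X]) : Mp d (-p) = -Mp d p := by
  simp only [Mp, Sp, derivative_neg, derivative_sub, derivative_mul, derivative_ofNat]
  ring

lemma iter_Mp_Sp (d n : ℕ) (p : ℝ[X]) : (Mp d)^[n] (Sp p) = Sp ((Lp d)^[n] p) := by
  induction n with
  | zero => rfl
  | succ n ih => rw [Function.iterate_succ_apply', Function.iterate_succ_apply', ih, Mp_Sp]

lemma iter_Mp_neg (d n : ℕ) (p : ℝ[X]) : (Mp d)^[n] (-p) = -(Mp d)^[n] p := by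
  induction n with
  | zero => rfl
  | succ n ih => rw [Function.iterate_succ_apply', Function.iterate_succ_apply', ih, Mp_neg]

/-- Laguerre-type ODE satisfied by the iterated radial Laplacian of the Gaussian. -/
lemma laguerre (d n : ℕ) :
    4 * X * derivative (derivative ((Lp d)^[n] 1)) +
      (2 * C (d : ℝ) - 2 * X) * derivative ((Lp d)^[n] 1) +
      2 * C (n : ℝ) * ((Lp d)^[n] 1) = 0 := by
  induction n with
  | zero => simp
  | succ n ih =>
    rw [Function.iterate_succ_apply']
    set q := (Lp d)^[n] 1 with hq
    have E1 := congrArg derivative ih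
    have E2 := congrArg derivative E1
    simp only [derivative_add, derivative_sub, derivative_mul, derivative_C, derivative_X,
      derivative_ofNat, derivative_zero, derivative_one, derivative_neg, zero_mul, mul_zero,
      zero_add, add_zero, one_mul, mul_one, zero_sub, sub_zero] at E1 E2
    simp only [Lp, Sp, derivative_add, derivative_sub, derivative_mul, derivative_C,
      derivative_X, derivative_ofNat, derivative_zero, derivative_one, derivative_neg,
      Nat.cast_succ, C_add, C_1]
    linear_combination (X - C (d : ℝ)) * ih + (2 * C (d : ℝ) - 4 * X) * E1 + 4 * X * E2

/-! ### Analytic layer -/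

noncomputable def Nsq (x : EuclideanSpace ℝ (Fin d)) : ℝ := ∑ i, x i * x i

noncomputable def Nd (x : EuclideanSpace ℝ (Fin d)) : EuclideanSpace ℝ (Fin d) →L[ℝ] ℝ :=
  ∑ i, ((x i) • EuclideanSpace.proj i + (x i) • EuclideanSpace.proj i)

lemma hasFDerivAt_proj (x : EuclideanSpace ℝ (Fin d)) (i : Fin d) :
    HasFDerivAt (fun y : EuclideanSpace ℝ (Fin d) => y i)
      (EuclideanSpace.proj i : EuclideanSpace ℝ (Fin d) →L[ℝ] ℝ) x := by
  exact (EuclideanSpace.proj i : EuclideanSpace ℝ (Fin d) →L[ℝ] ℝ).hasFDerivAt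

lemma hasFDerivAt_Nsq (x : EuclideanSpace ℝ (Fin d)) : HasFDerivAt Nsq (Nd x) x :=
  HasFDerivAt.fun_sum fun i _ => (hasFDerivAt_proj x i).mul (hasFDerivAt_proj x i)

lemma Nd_apply (x : EuclideanSpace ℝ (Fin d)) (j : Fin d) :
    Nd x (EuclideanSpace.single j 1) = 2 * x j := by
  simp [Nd, ContinuousLinearMap.sum_apply, EuclideanSpace.single_apply, mul_ite,
    Finset.sum_ite_eq, two_mul, Finset.sum_add_distrib, Finset.sum_ite_eq']

lemma norm_sq_eq (x : EuclideanSpace ℝ (Fin d)) : ‖x‖ ^ 2 = Nsq x := by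
  rw [EuclideanSpace.norm_eq, Real.sq_sqrt (by positivity)]
  simp [Nsq, sq]

noncomputable def gP (d : ℕ) (p : ℝ[X]) : EuclideanSpace ℝ (Fin d) → ℝ :=
  fun y => p.eval (Nsq y) * Real.exp (-Nsq y / 2)

noncomputable def hP (d : ℕ) (k : Fin d) (p : ℝ[X]) : EuclideanSpace ℝ (Fin d) → ℝ :=
  fun y => y k * gP d p y

lemma hasDerivAt_scal (p : ℝ[X]) (t : ℝ) :
    HasDerivAt (fun s : ℝ => p.eval s * Real.exp (-s / 2))
      ((Sp p).eval t * Real.exp (-t / 2) / 2) t := by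
  have h2 : HasDerivAt (fun s : ℝ => Real.exp (-s / 2)) (Real.exp (-t / 2) * (-1 / 2)) t := by
    have : HasDerivAt (fun s : ℝ => -s / 2) (-1 / 2) t := by
      simpa using ((hasDerivAt_id t).neg.div_const 2)
    simpa using this.exp
  have := (p.hasDerivAt t).fun_mul h2
  refine this.congr_deriv ?_
  simp only [Sp, eval_sub, eval_mul, eval_ofNat]
  ring

lemma hasFDerivAt_gP (p : ℝ[X]) (x : EuclideanSpace ℝ (Fin d)) :
    HasFDerivAt (gP d p) (((Sp p).eval (Nsq x) * Real.exp (-Nsq x / 2) / 2) • Nd x) x := by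
  exact (hasDerivAt_scal p (Nsq x)).comp_hasFDerivAt x (hasFDerivAt_Nsq x)

lemma pderiv'_gP (k : Fin d) (p : ℝ[X]) : pderiv' k (gP d p) = hP d k (Sp p) := by
  funext y
  show fderiv ℝ (gP d p) y (EuclideanSpace.single k 1) = _
  rw [(hasFDerivAt_gP p y).fderiv]
  rw [ContinuousLinearMap.smul_apply, Nd_apply]
  simp only [smul_eq_mul, hP, gP]
  ring

lemma hasFDerivAt_hP (k : Fin d) (p : ℝ[X]) (x : EuclideanSpace ℝ (Fin d)) :
    HasFDerivAt (hP d k p)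
      (x k • (((Sp p).eval (Nsq x) * Real.exp (-Nsq x / 2) / 2) • Nd x)
        + gP d p x • (EuclideanSpace.proj k : EuclideanSpace ℝ (Fin d) →L[ℝ] ℝ)) x :=
  (hasFDerivAt_proj x k).mul (hasFDerivAt_gP p x)

lemma pderiv'_hP (j k : Fin d) (p : ℝ[X]) :
    pderiv' j (hP d k p)
      = fun y => y k * hP d j (Sp p) y + (if j = k then 1 else 0) * gP d p y := by
  funext y
  show fderiv ℝ (hP d k p) y (EuclideanSpace.single j 1) = _
  rw [(hasFDerivAt_hP k p y).fderiv]
  rw [ContinuousLinearMap.add_apply, ContinuousLinearMap.smul_apply,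
    ContinuousLinearMap.smul_apply, Nd_apply, ContinuousLinearMap.smul_apply]
  have hproj : (EuclideanSpace.proj k : EuclideanSpace ℝ (Fin d) →L[ℝ] ℝ)
      (EuclideanSpace.single j 1) = if j = k then 1 else 0 := by
    simp [EuclideanSpace.single_apply, eq_comm]
  rw [hproj]
  simp only [smul_eq_mul, hP, gP]
  ring

lemma laplacian_gP (p : ℝ[X]) : laplacian (gP d p) = gP d (Lp d p) := by
  funext x
  have h1 : ∀ j : Fin d, (fun y => fderiv ℝ (gP d p) y (EuclideanSpace.single j 1))
      = hP d j (Sp p) := fun j => pderiv'_gP j p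
  have h2 : ∀ j : Fin d, fderiv ℝ (hP d j (Sp p)) x (EuclideanSpace.single j 1)
      = x j * (x j * gP d (Sp (Sp p)) x) + gP d (Sp p) x := by
    intro j
    have h := congrFun (pderiv'_hP j j (Sp p)) x
    simp only [pderiv'] at h
    rw [h]
    simp [hP]
  unfold laplacian
  simp only [h1, h2]
  rw [Finset.sum_add_distrib]
  have h3 : ∑ j : Fin d, x j * (x j * gP d (Sp (Sp p)) x) = Nsq x * gP d (Sp (Sp p)) x := by
    rw [Nsq, Finset.sum_mul]
    exact Finset.sum_congr rfl (by intros; ring)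
  rw [h3, Finset.sum_const, card_univ, Fintype.card_fin]
  simp only [gP, Lp, eval_add, eval_mul, eval_C, eval_X, nsmul_eq_mul]
  ring

lemma laplacian_hP (k : Fin d) (p : ℝ[X]) : laplacian (hP d k p) = hP d k (Mp d p) := by
  funext x
  have h1 : ∀ j : Fin d, (fun y => fderiv ℝ (hP d k p) y (EuclideanSpace.single j 1))
      = fun y => y k * hP d j (Sp p) y + (if j = k then 1 else 0) * gP d p y :=
    fun j => pderiv'_hP j k p
  have h2 : ∀ j : Fin d,
      fderiv ℝ (fun y => y k * hP d j (Sp p) y + (if j = k then 1 else 0) * gP d p y) x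
          (EuclideanSpace.single j 1)
      = x k * gP d (Sp p) x + x k * (x j * (x j * gP d (Sp (Sp p)) x))
        + (if j = k then 2 * (x j * gP d (Sp p) x) else 0) := by
    intro j
    have Hh : HasFDerivAt (fun y : EuclideanSpace ℝ (Fin d) => y k * hP d j (Sp p) y)
        (x k • (x j • (((Sp (Sp p)).eval (Nsq x) * Real.exp (-Nsq x / 2) / 2) • Nd x)
            + gP d (Sp p) x • (EuclideanSpace.proj j : EuclideanSpace ℝ (Fin d) →L[ℝ] ℝ))
          + hP d j (Sp p) x • (EuclideanSpace.proj k : EuclideanSpace ℝ (Fin d) →L[ℝ] ℝ)) x := by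
      have hin : HasFDerivAt (hP d j (Sp p))
          (x j • (((Sp (Sp p)).eval (Nsq x) * Real.exp (-Nsq x / 2) / 2) • Nd x)
            + gP d (Sp p) x • (EuclideanSpace.proj j : EuclideanSpace ℝ (Fin d) →L[ℝ] ℝ)) x := by
        have := hasFDerivAt_hP j (Sp p) x
        convert this using 2
      exact (hasFDerivAt_proj x k).mul hin
    have Hg := (hasFDerivAt_gP p x).const_mul (if j = k then (1:ℝ) else 0)
    have H := Hh.fun_add Hg
    rw [H.fderiv]
    have hprojk : (EuclideanSpace.proj k : EuclideanSpace ℝ (Fin d) →L[ℝ] ℝ)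
        (EuclideanSpace.single j 1) = if j = k then 1 else 0 := by
      simp [EuclideanSpace.single_apply, eq_comm]
    have hprojj : (EuclideanSpace.proj j : EuclideanSpace ℝ (Fin d) →L[ℝ] ℝ)
        (EuclideanSpace.single j 1) = 1 := by
      simp [EuclideanSpace.single_apply]
    rw [ContinuousLinearMap.add_apply, ContinuousLinearMap.add_apply,
      ContinuousLinearMap.smul_apply, ContinuousLinearMap.add_apply,
      ContinuousLinearMap.smul_apply, ContinuousLinearMap.smul_apply,
      ContinuousLinearMap.smul_apply, ContinuousLinearMap.smul_apply,
      ContinuousLinearMap.smul_apply, Nd_apply, hprojk, hprojj]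
    simp only [smul_eq_mul, hP, gP]
    by_cases hjk : j = k
    · subst hjk
      simp only [if_true, ContinuousLinearMap.add_apply, ContinuousLinearMap.smul_apply, Nd_apply, smul_eq_mul, hP, gP]
      ring
    · simp only [hjk, if_false, ContinuousLinearMap.add_apply, ContinuousLinearMap.smul_apply, Nd_apply, smul_eq_mul, hP, gP]
      ring
  unfold laplacian
  simp only [h1, h2]
  rw [Finset.sum_add_distrib, Finset.sum_add_distrib]
  have h3 : ∑ j : Fin d, x k * (x j * (x j * gP d (Sp (Sp p)) x))
      = x k * (Nsq x * gP d (Sp (Sp p)) x) := by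
    rw [Nsq, Finset.sum_mul, Finset.mul_sum]
    exact Finset.sum_congr rfl (by intros; ring)
  rw [h3, Finset.sum_const, card_univ, Fintype.card_fin, Finset.sum_ite_eq' univ k]
  simp only [Finset.mem_univ, if_true, hP, gP, Mp, eval_add, eval_mul, eval_C, eval_X,
    eval_ofNat, nsmul_eq_mul]
  ring

lemma iter_gP (n : ℕ) (p : ℝ[X]) :
    laplacian^[n] (gP d p) = gP d ((Lp d)^[n] p) := by
  induction n with
  | zero => rfl
  | succ n ih => rw [Function.iterate_succ_apply', ih, laplacian_gP, Function.iterate_succ_apply']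

lemma iter_hP (n : ℕ) (k : Fin d) (p : ℝ[X]) :
    laplacian^[n] (hP d k p) = hP d k ((Mp d)^[n] p) := by
  induction n with
  | zero => rfl
  | succ n ih => rw [Function.iterate_succ_apply', ih, laplacian_hP, Function.iterate_succ_apply']

end Stmt10T

theorem stmt_10 (d : ℕ) (m : ℕ) (hm : 1 ≤ m) (x : EuclideanSpace ℝ (Fin d)) :
    ∑ k : Fin d,
        pderiv' k (laplacian^[m - 1] (fun y => y k * Real.exp (-‖y‖ ^ 2 / 2))) x
      = (2 * ((m : ℝ) - 1) + d) *
          (laplacian^[m - 1] (fun y => Real.exp (-‖y‖ ^ 2 / 2))) x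
        + ∑ k : Fin d,
            x k * (laplacian^[m - 1]
              (fun y => pderiv' k (fun z => Real.exp (-‖z‖ ^ 2 / 2)) y)) x := by
  classical
  open Stmt10T Polynomial in
  set n := m - 1 with hn
  have hG : (fun y : EuclideanSpace ℝ (Fin d) => Real.exp (-‖y‖ ^ 2 / 2)) = gP d 1 := by
    funext y
    rw [norm_sq_eq]
    simp [gP]
  have hH : ∀ k : Fin d,
      (fun y : EuclideanSpace ℝ (Fin d) => y k * Real.exp (-‖y‖ ^ 2 / 2)) = hP d k 1 := by
    intro k
    funext y
    rw [norm_sq_eq]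
    simp [hP, gP]
  simp only [hH, hG, pderiv'_gP, iter_gP, iter_hP]
  set r := (Lp d)^[n] 1 with hr
  have hq : (Mp d)^[n] 1 = -(Sp r) := by
    have h1 : (1 : ℝ[X]) = -(Sp 1) := by simp [Sp]
    rw [h1, iter_Mp_neg, iter_Mp_Sp]
  have hs : (Mp d)^[n] (Sp 1) = Sp r := iter_Mp_Sp d n 1
  rw [hq, hs]
  set t := Nsq x with ht
  have hder : ∀ k : Fin d, pderiv' k (hP d k (-(Sp r))) x
      = x k * (x k * (eval t (Sp (-(Sp r))) * Real.exp (-t / 2)))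
        + eval t (-(Sp r)) * Real.exp (-t / 2) := by
    intro k
    have h := congrFun (pderiv'_hP k k (-(Sp r))) x
    rw [h]
    simp [hP, gP, ← ht]
  rw [Finset.sum_congr rfl (fun k _ => hder k)]
  rw [Finset.sum_add_distrib, Finset.sum_const, card_univ, Fintype.card_fin]
  have hsum : ∀ c : ℝ, ∑ k : Fin d, x k * (x k * c) = t * c := by
    intro c
    rw [ht, Nsq, Finset.sum_mul]
    exact Finset.sum_congr rfl (by intros; ring)
  rw [hsum]
  have hsum2 : ∑ k : Fin d, x k * hP d k (Sp r) x
      = t * (eval t (Sp r) * Real.exp (-t / 2)) := by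
    rw [← hsum (eval t (Sp r) * Real.exp (-t / 2))]
    exact Finset.sum_congr rfl (by intro k _; simp [hP, gP, ← ht])
  rw [hsum2]
  have hc : ((n : ℝ)) = (m : ℝ) - 1 := by
    rw [hn, Nat.cast_sub hm]
    norm_num
  have ode := congrArg (Polynomial.eval t) (laguerre d n)
  simp only [eval_add, eval_sub, eval_mul, eval_ofNat, eval_C, eval_X, eval_zero] at ode
  have hgPr : gP d r x = eval t r * Real.exp (-t / 2) := rfl
  rw [hgPr]
  simp only [Sp, eval_neg, eval_sub, eval_mul, eval_ofNat, derivative_neg, derivative_sub,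
    derivative_mul, derivative_ofNat, zero_mul, add_zero, zero_add]
  rw [← hc]
  linear_combination (-(Real.exp (-t / 2))) * ode
end

section
/- For 0 < α < 2 and integers m ≥ 1, the generalized binomial coefficient binomial(α, α/2 + m) = Γ(α+1)/(Γ(α/2+m+1)Γ(α/2−m+1)) satisfies (-1)^{m+1} Γ(α+1)/(Γ(α/2+m+1) Γ(α/2−m+1)) > 0. -/
lemma gamma_sign_aux (α : ℝ) (hα1 : 0 < α) (hα2 : α < 2) :
    ∀ m : ℕ, 1 ≤ m → 0 < (-1 : ℝ) ^ (m + 1) * Real.Gamma (α / 2 - m + 1) := by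
  intro m
  induction m with
  | zero => intro h; omega
  | succ n ih =>
    intro _
    rcases Nat.eq_or_lt_of_le (Nat.one_le_iff_ne_zero.mpr (Nat.succ_ne_zero n)) with h | h
    · -- n+1 = 1, i.e. n = 0
      have hn : n = 0 := by omega
      subst hn
      have h1 : (α / 2 - ((0:ℕ) + 1 : ℕ) + 1 : ℝ) = α / 2 := by push_cast; ring
      rw [h1]
      have : 0 < Real.Gamma (α / 2) := Real.Gamma_pos_of_pos (by linarith)
      simpa using this
    · have hn1 : 1 ≤ n := by omega
      have ihn := ih hn1
      have hx : (α / 2 - (n + 1 : ℕ) + 1 : ℝ) = α / 2 - n := by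
        push_cast; ring
      have hxne : (α / 2 - (n : ℝ)) ≠ 0 := by
        have : (α / 2 : ℝ) < n := by
          have : (1 : ℝ) ≤ n := by exact_mod_cast hn1
          linarith
        linarith
      have hneg : (α / 2 - (n : ℝ)) < 0 := by
        have : (1 : ℝ) ≤ n := by exact_mod_cast hn1
        linarith
      have hrec : Real.Gamma (α / 2 - n + 1) =
          (α / 2 - n) * Real.Gamma (α / 2 - n) := Real.Gamma_add_one hxne
      have hG : Real.Gamma (α / 2 - (n + 1 : ℕ) + 1) =
          Real.Gamma (α / 2 - n + 1) / (α / 2 - n) := by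
        rw [hx, hrec]
        exact (mul_div_cancel_left₀ _ hxne).symm
      rw [hG]
      have hsign : 0 < (-1 : ℝ) ^ (n + 1) * Real.Gamma (α / 2 - n + 1) := ihn
      have : (-1 : ℝ) ^ (n + 1 + 1) = -((-1 : ℝ) ^ (n + 1)) := by ring
      rw [this]
      rw [neg_mul, div_eq_mul_inv, ← mul_assoc]
      have hinv : (α / 2 - (n : ℝ))⁻¹ < 0 := inv_neg''.mpr hneg
      nlinarith [hsign, hinv]

theorem stmt_16 (α : ℝ) (hα1 : 0 < α) (hα2 : α < 2) (m : ℕ) (hm : 1 ≤ m) :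
    (-1 : ℝ) ^ (m + 1) *
      (Real.Gamma (α + 1) /
        (Real.Gamma (α / 2 + m + 1) * Real.Gamma (α / 2 - m + 1))) > 0 := by
  have hA : 0 < Real.Gamma (α + 1) := Real.Gamma_pos_of_pos (by linarith)
  have hB : 0 < Real.Gamma (α / 2 + m + 1) := Real.Gamma_pos_of_pos (by positivity)
  have hC := gamma_sign_aux α hα1 hα2 m hm
  rcases Nat.even_or_odd (m + 1) with he | ho
  · rw [he.neg_one_pow] at hC ⊢
    rw [one_mul] at hC ⊢
    exact div_pos hA (mul_pos hB hC)
  · rw [ho.neg_one_pow] at hC ⊢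
    have hCneg : Real.Gamma (α / 2 - m + 1) < 0 := by linarith
    have : Real.Gamma (α + 1) /
        (Real.Gamma (α / 2 + m + 1) * Real.Gamma (α / 2 - m + 1)) < 0 :=
      div_neg_of_pos_of_neg hA (mul_neg_of_pos_of_neg hB hCneg)
    linarith
end
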